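/- arXiv:2405.01025 — 3 statements merged into one kernel-verified Lean document; each statement's English description precedes it below -/
import Mathlib

section
/- Let d ≥ 1, ℏ > 0, let m : Fin d → ℝ with m_α > 0 for all α, and let V : ℝ^d → ℂ. Suppose W : ℝ × ℝ^d × ℝ^d → ℂ is C², Hermitian in the sense that W(t,q,q′) = conj(W(t,q′,q)) for all t,q,q′, and satisfies the von Neumann equation i ℏ ∂_t W(t,q,q′) = Σ_α (−ℏ²/(2 m_α)) (∂²_{q_α} W(t,q,q′) − ∂²_{q′_α} W(t,q,q′)) + (V(q) − V(q′)) W(t,q,q′). Define the density ρ(t,q) = Re(W(t,q,q)) and the probability current J_α(t,q) = (ℏ/m_α) · Im( (∂_{q_α} W)(t,q,q′) evaluated at q′ = q ), where ∂_{q_α} acts on the first configuration argument. Then the continuity equation ∂_t ρ(t,q) + Σ_α ∂_{q_α}(J_α)(t,q) = 0 holds for all (t,q). (Equivariance: the Born distribution W(q,q,t) is transported by the W-Bohmian velocity field, the key lemma for the empirical equivalence of W-BM and Ψ-BM.) -/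
open Complex

/-- Time derivative `∂_t F` of a kernel on `ℝ × ℝ^d × ℝ^d`. -/
noncomputable def kT {d : ℕ}
    (F : ℝ × EuclideanSpace ℝ (Fin d) × EuclideanSpace ℝ (Fin d) → ℂ)
    (p : ℝ × EuclideanSpace ℝ (Fin d) × EuclideanSpace ℝ (Fin d)) : ℂ :=
  fderiv ℝ F p (1, 0, 0)

/-- Partial derivative `∂_{q_α} F` in the first configuration argument of a kernel. -/
noncomputable def kQ {d : ℕ} (α : Fin d)
    (F : ℝ × EuclideanSpace ℝ (Fin d) × EuclideanSpace ℝ (Fin d) → ℂ)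
    (p : ℝ × EuclideanSpace ℝ (Fin d) × EuclideanSpace ℝ (Fin d)) : ℂ :=
  fderiv ℝ F p (0, EuclideanSpace.single α 1, 0)

/-- Partial derivative `∂_{q′_α} F` in the second configuration argument of a kernel. -/
noncomputable def kQ' {d : ℕ} (α : Fin d)
    (F : ℝ × EuclideanSpace ℝ (Fin d) × EuclideanSpace ℝ (Fin d) → ℂ)
    (p : ℝ × EuclideanSpace ℝ (Fin d) × EuclideanSpace ℝ (Fin d)) : ℂ :=
  fderiv ℝ F p (0, 0, EuclideanSpace.single α 1)

section Aux

lemma fderiv_fderiv_apply' {X Y : Type*} [NormedAddCommGroup X] [NormedSpace ℝ X]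
    [NormedAddCommGroup Y] [NormedSpace ℝ Y] {f : X → Y} (hf : ContDiff ℝ 2 f) (p v w : X) :
    fderiv ℝ (fun x => fderiv ℝ f x v) p w = fderiv ℝ (fderiv ℝ f) p w v := by
  have hd : DifferentiableAt ℝ (fderiv ℝ f) p :=
    ((hf.fderiv_right (m := 1) (by norm_num)).differentiable (by simp)) p
  rw [fderiv_clm_apply hd (differentiableAt_const v)]
  simp

noncomputable def diagL (d : ℕ) :
    (ℝ × EuclideanSpace ℝ (Fin d)) →L[ℝ]
      (ℝ × EuclideanSpace ℝ (Fin d) × EuclideanSpace ℝ (Fin d)) :=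
  (ContinuousLinearMap.fst ℝ ℝ (EuclideanSpace ℝ (Fin d))).prod
    ((ContinuousLinearMap.snd ℝ ℝ (EuclideanSpace ℝ (Fin d))).prod
      (ContinuousLinearMap.snd ℝ ℝ (EuclideanSpace ℝ (Fin d))))

noncomputable def swapL (d : ℕ) :
    (ℝ × EuclideanSpace ℝ (Fin d) × EuclideanSpace ℝ (Fin d)) →L[ℝ]
      (ℝ × EuclideanSpace ℝ (Fin d) × EuclideanSpace ℝ (Fin d)) :=
  (ContinuousLinearMap.fst ℝ ℝ _).prod
    (((ContinuousLinearMap.snd ℝ (EuclideanSpace ℝ (Fin d)) (EuclideanSpace ℝ (Fin d))).comp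
        (ContinuousLinearMap.snd ℝ ℝ _)).prod
      ((ContinuousLinearMap.fst ℝ (EuclideanSpace ℝ (Fin d)) (EuclideanSpace ℝ (Fin d))).comp
        (ContinuousLinearMap.snd ℝ ℝ _)))

@[simp] lemma diagL_apply (d : ℕ) (x : ℝ × EuclideanSpace ℝ (Fin d)) :
    diagL d x = (x.1, x.2, x.2) := rfl

@[simp] lemma swapL_apply (d : ℕ)
    (x : ℝ × EuclideanSpace ℝ (Fin d) × EuclideanSpace ℝ (Fin d)) :
    swapL d x = (x.1, x.2.2, x.2.1) := rfl

lemma fderiv_conj_swap {d : ℕ}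
    {f g : ℝ × EuclideanSpace ℝ (Fin d) × EuclideanSpace ℝ (Fin d) → ℂ}
    (hg : Differentiable ℝ g)
    (hfg : ∀ x, f x = starRingEnd ℂ (g (swapL d x)))
    (p v : ℝ × EuclideanSpace ℝ (Fin d) × EuclideanSpace ℝ (Fin d)) :
    fderiv ℝ f p v = starRingEnd ℂ (fderiv ℝ g (swapL d p) (swapL d v)) := by
  have h1 : HasFDerivAt (fun x => Complex.conjCLE (g (swapL d x)))
      ((Complex.conjCLE.toContinuousLinearMap.comp
        (fderiv ℝ g (swapL d p))).comp (swapL d)) p :=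
    (Complex.conjCLE.toContinuousLinearMap.hasFDerivAt.comp _
      ((hg (swapL d p)).hasFDerivAt)).comp p (swapL d).hasFDerivAt
  have h2 : HasFDerivAt f
      ((Complex.conjCLE.toContinuousLinearMap.comp
        (fderiv ℝ g (swapL d p))).comp (swapL d)) p := by
    apply h1.congr_of_eventuallyEq
    exact Filter.Eventually.of_forall fun x => by simpa using hfg x
  rw [h2.fderiv]
  simp

/-- Hermitian symmetry of the second derivative. -/
lemma herm_fderiv2 {d : ℕ}
    {W : ℝ × EuclideanSpace ℝ (Fin d) × EuclideanSpace ℝ (Fin d) → ℂ}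
    (hC2 : ContDiff ℝ 2 W)
    (hHerm : ∀ (t : ℝ) (q q' : EuclideanSpace ℝ (Fin d)), W (t, q, q') = star (W (t, q', q)))
    (p v w : ℝ × EuclideanSpace ℝ (Fin d) × EuclideanSpace ℝ (Fin d)) :
    fderiv ℝ (fderiv ℝ W) p w v =
      starRingEnd ℂ (fderiv ℝ (fderiv ℝ W) (swapL d p) (swapL d w) (swapL d v)) := by
  have hW1 : Differentiable ℝ W := hC2.differentiable (by simp)
  have hfst : ∀ x, fderiv ℝ W x v =
      starRingEnd ℂ ((fun y => fderiv ℝ W y (swapL d v)) (swapL d x)) := by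
    intro x
    exact fderiv_conj_swap hW1 (fun y => by
      have := hHerm y.1 y.2.1 y.2.2
      simpa using this) x v
  have hgd : Differentiable ℝ (fun y => fderiv ℝ W y (swapL d v)) :=
    (((hC2.fderiv_right (m := 1) (by norm_num)).differentiable (by simp))).clm_apply
      (differentiable_const _)
  have key : fderiv ℝ (fun x => fderiv ℝ W x v) p w =
      starRingEnd ℂ (fderiv ℝ (fun y => fderiv ℝ W y (swapL d v)) (swapL d p) (swapL d w)) :=
    fderiv_conj_swap hgd hfst p w
  rw [fderiv_fderiv_apply' hC2 p v w] at key
  rw [fderiv_fderiv_apply' hC2 (swapL d p) (swapL d v) (swapL d w)] at key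
  exact key

end Aux

/-- Equivariance in W-Bohmian mechanics: the Born density
`ρ = W(t,q,q)` and the current `J_α = (ℏ/m_α) Im ∂_{q_α}W|_{q'=q}` obey the continuity
equation whenever the Hermitian kernel `W` solves the von Neumann equation. -/
theorem wBohm_equivariance_continuity
    (d : ℕ) (hd : 1 ≤ d) (ℏ : ℝ) (hℏ : 0 < ℏ)
    (m : Fin d → ℝ) (hm : ∀ α, 0 < m α)
    (V : EuclideanSpace ℝ (Fin d) → ℂ)
    (W : ℝ × EuclideanSpace ℝ (Fin d) × EuclideanSpace ℝ (Fin d) → ℂ)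
    (hC2 : ContDiff ℝ 2 W)
    (hHerm : ∀ (t : ℝ) (q q' : EuclideanSpace ℝ (Fin d)), W (t, q, q') = star (W (t, q', q)))
    (hVN : ∀ p : ℝ × EuclideanSpace ℝ (Fin d) × EuclideanSpace ℝ (Fin d),
      (Complex.I * ℏ) * kT W p =
        (∑ α : Fin d, ((-ℏ ^ 2 / (2 * m α) : ℝ) : ℂ) * (kQ α (kQ α W) p - kQ' α (kQ' α W) p))
          + (V p.2.1 - V p.2.2) * W p)
    (ρ : ℝ × EuclideanSpace ℝ (Fin d) → ℝ)
    (hρ : ρ = fun p => (W (p.1, p.2, p.2)).re)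
    (J : Fin d → (ℝ × EuclideanSpace ℝ (Fin d) → ℝ))
    (hJ : J = fun α p => (ℏ / m α) * (kQ α W (p.1, p.2, p.2)).im) :
    ∀ p : ℝ × EuclideanSpace ℝ (Fin d),
      fderiv ℝ ρ p (1, 0) + ∑ α : Fin d, fderiv ℝ (J α) p (0, EuclideanSpace.single α 1) = 0 := by
  intro p
  set Lp : ℝ × EuclideanSpace ℝ (Fin d) × EuclideanSpace ℝ (Fin d) := (p.1, p.2, p.2) with hLp
  have hW1 : Differentiable ℝ W := hC2.differentiable (by simp)
  set f2 := fderiv ℝ (fderiv ℝ W) Lp with hf2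
  -- abbreviations for directions
  set eQ : Fin d → ℝ × EuclideanSpace ℝ (Fin d) × EuclideanSpace ℝ (Fin d) :=
    fun α => (0, EuclideanSpace.single α 1, 0) with heQ
  set eQ' : Fin d → ℝ × EuclideanSpace ℝ (Fin d) × EuclideanSpace ℝ (Fin d) :=
    fun α => (0, 0, EuclideanSpace.single α 1) with heQ'
  have hsymm : ∀ v w, f2 v w = f2 w v := by
    intro v w
    exact (hC2.contDiffAt.isSymmSndFDerivAt (by norm_num)) v w
  have hswapLp : swapL d Lp = Lp := rfl
  have hherm2 : ∀ v w, f2 w v = starRingEnd ℂ (f2 (swapL d w) (swapL d v)) := by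
    intro v w
    have := herm_fderiv2 hC2 hHerm Lp v w
    rwa [hswapLp] at this
  have hswap_eQ : ∀ α, swapL d (eQ α) = eQ' α := fun α => rfl
  have hswap_eQ' : ∀ α, swapL d (eQ' α) = eQ α := fun α => rfl
  set z : Fin d → ℂ := fun α => f2 (eQ α) (eQ α) with hz
  -- second derivatives expressed via f2
  have hkQkQ : ∀ α, kQ α (kQ α W) Lp = z α := by
    intro α
    show fderiv ℝ (fun x => fderiv ℝ W x (eQ α)) Lp (eQ α) = _
    rw [fderiv_fderiv_apply' hC2]
  have hkQ'kQ' : ∀ α, kQ' α (kQ' α W) Lp = starRingEnd ℂ (z α) := by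
    intro α
    show fderiv ℝ (fun x => fderiv ℝ W x (eQ' α)) Lp (eQ' α) = _
    rw [fderiv_fderiv_apply' hC2]
    rw [hherm2 (eQ' α) (eQ' α), hswap_eQ']
  -- mixed term is real
  have hmixed : ∀ α, (f2 (eQ α) (eQ' α)).im = 0 := by
    intro α
    have h1 : f2 (eQ α) (eQ' α) = starRingEnd ℂ (f2 (eQ α) (eQ' α)) := by
      calc f2 (eQ α) (eQ' α) = f2 (eQ' α) (eQ α) := hsymm _ _
        _ = starRingEnd ℂ (f2 (eQ α) (eQ' α)) := by
            rw [hherm2 (eQ α) (eQ' α), hswap_eQ, hswap_eQ']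
    have := congrArg Complex.im h1
    simp at this
    linarith
  -- ∂_t ρ
  have hρd : fderiv ℝ ρ p (1, 0) = (kT W Lp).re := by
    have h1 : HasFDerivAt ρ
        ((Complex.reCLM.comp (fderiv ℝ W Lp)).comp (diagL d)) p := by
      rw [hρ]
      exact (Complex.reCLM.hasFDerivAt.comp _ ((hW1 Lp).hasFDerivAt)).comp p (diagL d).hasFDerivAt
    rw [h1.fderiv]
    rfl
  -- divergence of J
  have hJd : ∀ α, fderiv ℝ (J α) p (0, EuclideanSpace.single α 1) = (ℏ / m α) * (z α).im := by
    intro α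
    have hGd : Differentiable ℝ (fun x => fderiv ℝ W x (eQ α)) :=
      (((hC2.fderiv_right (m := 1) (by norm_num)).differentiable (by simp))).clm_apply
        (differentiable_const _)
    have h1 : HasFDerivAt (J α)
        ((ℏ / m α) • ((Complex.imCLM.comp
          (fderiv ℝ (fun x => fderiv ℝ W x (eQ α)) Lp)).comp (diagL d))) p := by
      rw [hJ]
      exact ((Complex.imCLM.hasFDerivAt.comp _
        ((hGd Lp).hasFDerivAt)).comp p (diagL d).hasFDerivAt).const_mul (ℏ / m α)
    rw [h1.fderiv]
    have hdir : diagL d ((0 : ℝ × EuclideanSpace ℝ (Fin d)).1,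
        EuclideanSpace.single α 1) = eQ α + eQ' α := by
      simp [heQ, heQ', Prod.ext_iff]
    have : fderiv ℝ (fun x => fderiv ℝ W x (eQ α)) Lp (eQ α + eQ' α)
        = z α + f2 (eQ α) (eQ' α) := by
      rw [map_add, fderiv_fderiv_apply' hC2, fderiv_fderiv_apply' hC2,
        hsymm (eQ' α) (eQ α)]
    simp only [ContinuousLinearMap.coe_smul', Pi.smul_apply, ContinuousLinearMap.coe_comp',
      Function.comp_apply]
    have hdiag : diagL d ((0 : ℝ), EuclideanSpace.single α 1) = eQ α + eQ' α := by
      simp [heQ, heQ', Prod.ext_iff]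
    rw [hdiag, this]
    simp [smul_eq_mul, hmixed α]
  -- von Neumann equation on the diagonal
  set r : ℝ := ∑ α : Fin d, (-ℏ ^ 2 / (2 * m α)) * (2 * (z α).im) with hr
  have hkT : ((ℏ : ℝ) : ℂ) * kT W Lp = (r : ℂ) := by
    have h := hVN Lp
    apply mul_left_cancel₀ Complex.I_ne_zero
    rw [← mul_assoc, h]
    have hV : (V Lp.2.1 - V Lp.2.2) * W Lp = 0 := by
      simp [hLp]
    rw [hV, add_zero]
    have : ∀ α : Fin d,
        ((-ℏ ^ 2 / (2 * m α) : ℝ) : ℂ) * (kQ α (kQ α W) Lp - kQ' α (kQ' α W) Lp)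
          = Complex.I * (((-ℏ ^ 2 / (2 * m α)) * (2 * (z α).im) : ℝ) : ℂ) := by
      intro α
      rw [hkQkQ α, hkQ'kQ' α, Complex.sub_conj]
      push_cast
      ring
    rw [Finset.sum_congr rfl (fun α _ => this α), ← Finset.mul_sum, hr]
    push_cast
    ring
  have hkTre : (kT W Lp).re = r / ℏ := by
    have := congrArg Complex.re hkT
    simp [Complex.mul_re] at this
    field_simp
    linarith [this]
  rw [hρd, hkTre]
  rw [Finset.sum_congr rfl (fun α _ => hJd α)]
  rw [hr, Finset.sum_div, ← Finset.sum_add_distrib]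
  apply Finset.sum_eq_zero
  intro α _
  have hm' : m α ≠ 0 := (hm α).ne'
  field_simp
  ring
end

section
/- Let n ≥ 1, let ψ ∈ ℂⁿ be a unit vector, let Λ be a positive semidefinite n×n complex matrix with S = √Λ, and suppose S.mulVec ψ ≠ 0. Then: (a) trace(|ψ⟩⟨ψ| * Λ) = ‖S.mulVec ψ‖², so the Ψ-GRW collapse-center probability density ‖Λ^{1/2}ψ‖² and the W-GRW collapse-center probability density tr(W Λ) agree when W = |ψ⟩⟨ψ|; and (b) (trace(|ψ⟩⟨ψ| * Λ))⁻¹ • (S * |ψ⟩⟨ψ| * S) = |ψ⁺⟩⟨ψ⁺| where ψ⁺ = ‖S.mulVec ψ‖⁻¹ • S.mulVec ψ. (On pure states, the W-GRW collapse law reduces exactly to the Ψ-GRW collapse law, both in outcome probabilities and in post-collapse states.) -/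
open Matrix
open scoped ComplexOrder MatrixOrder Matrix.Norms.L2Operator

/-- The outer product `|ψ⟩⟨ψ|` of a vector in `ℂⁿ`: the matrix with `(i,j)` entry
`ψ i * conj (ψ j)`. -/
noncomputable def outerProd {n : ℕ} (ψ : EuclideanSpace ℂ (Fin n)) :
    Matrix (Fin n) (Fin n) ℂ :=
  Matrix.of fun i j => ψ i * star (ψ j)

/-- Matrix-vector multiplication, valued in `EuclideanSpace ℂ (Fin n)`. -/
noncomputable def eMulVec {n : ℕ} (M : Matrix (Fin n) (Fin n) ℂ)
    (ψ : EuclideanSpace ℂ (Fin n)) : EuclideanSpace ℂ (Fin n) :=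
  (WithLp.equiv 2 (Fin n → ℂ)).symm (M.mulVec ((WithLp.equiv 2 (Fin n → ℂ)) ψ))

lemma trace_outerProd_mul {n : ℕ} (ψ : EuclideanSpace ℂ (Fin n))
    (M : Matrix (Fin n) (Fin n) ℂ) :
    (outerProd ψ * M).trace = dotProduct (star (ψ : Fin n → ℂ)) (M.mulVec ψ) := by
  simp only [Matrix.trace, Matrix.diag, Matrix.mul_apply, outerProd, Matrix.of_apply,
    dotProduct, Matrix.mulVec, Pi.star_apply, Finset.mul_sum]
  rw [Finset.sum_comm]
  exact Finset.sum_congr rfl fun j _ => Finset.sum_congr rfl fun i _ => by ring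

/-- On pure states the W-GRW collapse law reduces exactly to the Ψ-GRW
collapse law: collapse-center probabilities agree, and the collapsed density matrix is the
outer product of the collapsed wave function. -/
theorem wGRW_collapse_reduces_to_psiGRW
    (n : ℕ) (hn : 1 ≤ n)
    (ψ : EuclideanSpace ℂ (Fin n)) (hψ : ‖ψ‖ = 1)
    (Λ : Matrix (Fin n) (Fin n) ℂ) (hΛ : Λ.PosSemidef)
    (S : Matrix (Fin n) (Fin n) ℂ) (hS : S = CFC.sqrt Λ)
    (hSψ : eMulVec S ψ ≠ 0) :
    (outerProd ψ * Λ).trace = ((‖eMulVec S ψ‖ ^ 2 : ℝ) : ℂ) ∧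
    ((outerProd ψ * Λ).trace)⁻¹ • (S * outerProd ψ * S) =
      outerProd ((‖eMulVec S ψ‖⁻¹ : ℝ) • eMulVec S ψ) := by
  have hH : S.IsHermitian := hS ▸ (Matrix.nonneg_iff_posSemidef.mp (CFC.sqrt_nonneg Λ)).1
  have hstarS : ∀ a b, star (S a b) = S b a := fun a b => by
    rw [← Matrix.conjTranspose_apply, hH]
  have hSS : S * S = Λ := by rw [hS]; exact CFC.sqrt_mul_sqrt_self Λ hΛ.nonneg
  set φ : EuclideanSpace ℂ (Fin n) := eMulVec S ψ with hφdef
  have hφ : (φ : Fin n → ℂ) = S.mulVec ψ := rfl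
  have hinner : (starRingEnd ℂ) ∘ (φ : Fin n → ℂ) ⬝ᵥ (φ : Fin n → ℂ) = (inner ℂ φ φ : ℂ) := by
    rw [PiLp.inner_apply]
    simp [dotProduct, Complex.conj_mul']
  have htr : (outerProd ψ * Λ).trace = ((‖φ‖ ^ 2 : ℝ) : ℂ) := by
    rw [trace_outerProd_mul, ← hSS, ← Matrix.mulVec_mulVec]
    nth_rewrite 1 [← hH]
    rw [Matrix.dotProduct_mulVec, ← Matrix.star_mulVec, ← hφ]
    have : star (φ : Fin n → ℂ) ⬝ᵥ (φ : Fin n → ℂ)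
        = (starRingEnd ℂ) ∘ (φ : Fin n → ℂ) ⬝ᵥ (φ : Fin n → ℂ) := rfl
    rw [this, hinner, inner_self_eq_norm_sq_to_K]
    norm_cast
  refine ⟨htr, ?_⟩
  have houter : S * outerProd ψ * S = outerProd φ := by
    ext i j
    simp only [Matrix.mul_apply, outerProd, Matrix.of_apply, hφ, Matrix.mulVec,
      dotProduct, star_sum, star_mul', hstarS, Finset.sum_mul, Finset.mul_sum]
    exact Finset.sum_congr rfl fun k _ => Finset.sum_congr rfl fun l _ => by ring
  rw [htr, houter]
  ext i j
  have hsm : ∀ m, (((‖φ‖⁻¹ : ℝ)) • φ) m = ((‖φ‖⁻¹ : ℝ) : ℂ) * φ m := fun m => by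
    simp [PiLp.smul_apply, Complex.real_smul]
  simp only [Matrix.smul_apply, outerProd, Matrix.of_apply, hsm, star_mul', smul_eq_mul,
    Complex.star_def, Complex.conj_ofReal]
  push_cast
  ring
end

section
/- Let X and Y be types, let ψ⁻, ψ⁺ : X → ℂ and φ⁻, φ⁺ : Y → ℂ, and define the universal density matrix kernel W(x,y,x′,y′) = (1/2)·ψ⁻(x)φ⁻(y)·conj(ψ⁻(x′)φ⁻(y′)) + (1/2)·ψ⁺(x)φ⁺(y)·conj(ψ⁺(x′)φ⁺(y′)). Suppose the actual environmental configuration Y₀ : Y satisfies φ⁺(Y₀) = 0 and φ⁻(Y₀) ≠ 0. Then the conditional density matrix w(x,x′) = W(x,Y₀,x′,Y₀) satisfies w(x,x′) = χ(x)·conj(χ(x′)) for all x, x′, where χ(x) = (|φ⁻(Y₀)|/√2)·ψ⁻(x), and χ is not identically zero provided ψ⁻ is not identically zero. (After the measurement record forms, the conditional density matrix of the subsystem in W-BM collapses from a mixed state to the pure state ψ⁻(x)ψ⁻*(x′): collapse without 'textbook collapse'.) -/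
open Complex

/-- Collapse without "textbook collapse": after the measurement record
forms (the actual environment configuration `Y₀` lies outside the support of `φ⁺`), the
conditional density matrix of the subsystem in W-Bohmian mechanics is the pure state
`χ(x)·conj(χ(x′))` with `χ = (|φ⁻(Y₀)|/√2)·ψ⁻`. -/
theorem conditional_density_matrix_collapses_to_pure
    (X Y : Type*)
    (ψm ψp : X → ℂ) (φm φp : Y → ℂ)
    (W : X → Y → X → Y → ℂ)
    (hW : W = fun x y x' y' =>
      (1 / 2 : ℂ) * (ψm x * φm y) * star (ψm x' * φm y') +
      (1 / 2 : ℂ) * (ψp x * φp y) * star (ψp x' * φp y'))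
    (Y₀ : Y) (hp : φp Y₀ = 0) (hm : φm Y₀ ≠ 0)
    (w : X → X → ℂ) (hw : w = fun x x' => W x Y₀ x' Y₀)
    (χ : X → ℂ)
    (hχ : χ = fun x => ((‖φm Y₀‖ / Real.sqrt 2 : ℝ) : ℂ) * ψm x) :
    (∀ x x', w x x' = χ x * star (χ x')) ∧
    ((∃ x, ψm x ≠ 0) → ∃ x, χ x ≠ 0) := by
  have hc : ((‖φm Y₀‖ / Real.sqrt 2 : ℝ) : ℂ) *
      star ((‖φm Y₀‖ / Real.sqrt 2 : ℝ) : ℂ) =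
      (1 / 2 : ℂ) * (φm Y₀ * star (φm Y₀)) := by
    rw [star_def, Complex.conj_ofReal, Complex.mul_conj', ← Complex.ofReal_mul]
    rw [div_mul_div_comm, Real.mul_self_sqrt (by norm_num)]
    push_cast
    ring
  constructor
  · intro x x'
    subst hW hw hχ
    simp only [hp, star_mul']
    calc (1 / 2 : ℂ) * (ψm x * φm Y₀) * (star (ψm x') * star (φm Y₀)) +
        (1 / 2 : ℂ) * (ψp x * 0) * (star (ψp x') * star (0 : ℂ))
        = ((1 / 2 : ℂ) * (φm Y₀ * star (φm Y₀))) * (ψm x * star (ψm x')) := by ring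
      _ = (((‖φm Y₀‖ / Real.sqrt 2 : ℝ) : ℂ) *
          star ((‖φm Y₀‖ / Real.sqrt 2 : ℝ) : ℂ)) * (ψm x * star (ψm x')) := by
          rw [hc]
      _ = _ := by ring
  · rintro ⟨x, hx⟩
    refine ⟨x, ?_⟩
    subst hχ
    simp only [ne_eq, mul_eq_zero, not_or]
    refine ⟨?_, hx⟩
    simp [Complex.ofReal_eq_zero, div_eq_zero_iff, hm,
      Real.sqrt_eq_zero, norm_ne_zero_iff.mpr hm]
end
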